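/- (Corollary 1) Under the Sequential Measurements model, if a measurement is repeated and no intervening incompatible measurements are performed, then the outcome μ-almost surely remains unchanged: for every density matrix ρ, every n ≥ 2, every sequence of positions (i₁,j₁), …, (iₙ,jₙ) ∈ {1,2,3}², and every k with 1 ≤ k ≤ n−1 such that V_{iₙjₙ} = V_{i_kj_k} and the operators V_{i_kj_k}, V_{i_{k+1}j_{k+1}}, …, V_{iₙjₙ} are mutually commuting, the following holds for all outcomes s₁,…,sₙ ∈ {−1,+1}: if sₙ ≠ s_k then μ({u ∈ Ω : g(φ_{i₁j₁}(u)) = s₁, …, g(φ_{iₙjₙ}(⋯(φ_{i₁j₁}(u))⋯)) = sₙ}) = 0, and if sₙ = s_k then this probability equals μ({u ∈ Ω : g(φ_{i₁j₁}(u)) = s₁, …, g(φ_{i_{n−1}j_{n−1}}(⋯(φ_{i₁j₁}(u))⋯)) = s_{n−1}}). -/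

import Mathlib

open Matrix MeasureTheory
open scoped Kronecker ComplexOrder

noncomputable section
open scoped Classical

/-- The Pauli matrix σx. -/
def σx : Matrix (Fin 2) (Fin 2) ℂ := !![0, 1; 1, 0]

/-- The Pauli matrix σy. -/
def σy : Matrix (Fin 2) (Fin 2) ℂ := !![0, -Complex.I; Complex.I, 0]

/-- The Pauli matrix σz. -/
def σz : Matrix (Fin 2) (Fin 2) ℂ := !![1, 0; 0, -1]

/-- The Mermin–Peres square of nine 4×4 operators, `MP i j` being the entry in
row `i`, column `j`. -/
def MP : Fin 3 → Fin 3 → Matrix (Fin 2 × Fin 2) (Fin 2 × Fin 2) ℂ :=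
  ![![σx ⊗ₖ (1 : Matrix (Fin 2) (Fin 2) ℂ), (1 : Matrix (Fin 2) (Fin 2) ℂ) ⊗ₖ σx, σx ⊗ₖ σx],
    ![(1 : Matrix (Fin 2) (Fin 2) ℂ) ⊗ₖ σy, σy ⊗ₖ (1 : Matrix (Fin 2) (Fin 2) ℂ), σy ⊗ₖ σy],
    ![σx ⊗ₖ σy, σy ⊗ₖ σx, σz ⊗ₖ σz]]

/-- The projection `Π_{ij}^s = (I + s·V_{ij})/2` onto the `s`-eigenspace of the
Mermin–Peres operator at position `p = (i,j)`, for `s ∈ {−1,+1}`. -/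
def Proj (p : Fin 3 × Fin 3) (s : ℝ) : Matrix (Fin 2 × Fin 2) (Fin 2 × Fin 2) ℂ :=
  (2⁻¹ : ℂ) • (1 + (s : ℂ) • MP p.1 p.2)

/-- The hidden variable space `Ω = [0,1]^ℕ`, realized as sequences of reals
(the relevant probability measure is supported on `[0,1]^ℕ`). -/
abbrev HV : Type := ℕ → ℝ

/-- `Mset n` is the set of hidden states whose first `n` coordinates have been
written by measurements (i.e. `27·u_k` is an integer exactly for `k < n`).
Coordinates are indexed from 0 here, so `u k` is the `(k+1)`-th coordinate. -/
def Mset (n : ℕ) : Set HV :=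
  {u | (∀ k < n, ∃ m : ℤ, 27 * u k = m) ∧ ∀ k ≥ n, ¬∃ m : ℤ, 27 * u k = m}

/-- The integer `m ∈ {0,…,26}` encoded in the `k`-th coordinate of `u`. -/
def code (u : HV) (k : ℕ) : ℕ := (⌊27 * u k⌋).toNat

/-- Decode the position (row, column) of the recorded measurement in the `k`-th
coordinate: writing `code u k = (d₂d₁d₀)₃`, the position is `(d₁, d₀)`
(0-indexed, corresponding to row `d₁+1`, column `d₀+1`). -/
def decPos (u : HV) (k : ℕ) : Fin 3 × Fin 3 :=
  (⟨code u k / 3 % 3, by omega⟩, ⟨code u k % 3, by omega⟩)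

/-- Decode the recorded outcome in the `k`-th coordinate: `−1` if the leading
base-three digit `d₂` is `0`, and `+1` if it is `2`. -/
def decSign (u : HV) (k : ℕ) : ℝ := if code u k / 9 % 3 = 0 then -1 else 1

/-- The history operator `Π_{i₁j₁}^{s₁} ⋯ Π_{i_nj_n}^{s_n}` encoded in the first
`n` coordinates of `u`. -/
def hist (u : HV) (n : ℕ) : Matrix (Fin 2 × Fin 2) (Fin 2 × Fin 2) ℂ :=
  ((List.range n).map fun k => Proj (decPos u k) (decSign u k)).prod

/-- The conditional CDF `F_{ij}(x | u₁,…,u_n)` for a measurement of `V_{ij}`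
given the measurement history recorded in the first `n` coordinates of `u`:
`F_{ij}(−1 | ⋯) = Tr[ρ·Π_{i₁j₁}^{s₁}⋯Π_{i_nj_n}^{s_n}·Π_{ij}^{−1}] /
Tr[ρ·Π_{i₁j₁}^{s₁}⋯Π_{i_nj_n}^{s_n}]` and `F_{ij}(x | ⋯) = 1` for `x = +1`. -/
def F (ρ : Matrix (Fin 2 × Fin 2) (Fin 2 × Fin 2) ℂ) (p : Fin 3 × Fin 3)
    (x : ℝ) (u : HV) (n : ℕ) : ℝ :=
  if x = -1 then
    ((ρ * hist u n * Proj p (-1)).trace).re / ((ρ * hist u n).trace).re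
  else 1

/-- The measurement outcome `χ_{ij}(u) = inf{x ∈ {−1,+1} : F_{ij}(x | u₁,…,u_n) > u_{n+1}}`
for a measurement of `V_{ij}` on a hidden state `u ∈ Mset n`. -/
def chi (ρ : Matrix (Fin 2 × Fin 2) (Fin 2 × Fin 2) ℂ) (p : Fin 3 × Fin 3)
    (u : HV) (n : ℕ) : ℝ :=
  sInf {x : ℝ | (x = -1 ∨ x = 1) ∧ F ρ p x u n > u n}

/-- The encoding map `ν_{ij}`: the outcome `x = ∓1` of a measurement of `V_{ij}`
is recorded as the coordinate value `(3(i−1)+(j−1))/27` resp.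
`(18+3(i−1)+(j−1))/27` (here `p.1, p.2` are the 0-indexed row and column). -/
def enc (p : Fin 3 × Fin 3) (x : ℝ) : ℝ :=
  if x = -1 then (3 * (p.1 : ℕ) + (p.2 : ℕ) : ℕ) / 27
  else ((18 + 3 * (p.1 : ℕ) + (p.2 : ℕ) : ℕ) : ℝ) / 27

/-- The measurement interaction map `φ_{ij}` for the operator at position `p`,
given initial quantum state `ρ`: if `u ∈ Mset n`, the `(n+1)`-th coordinate of
`u` is replaced by `ν_{ij}(χ_{ij}(u))`; otherwise `u` is unchanged. -/
def phi (ρ : Matrix (Fin 2 × Fin 2) (Fin 2 × Fin 2) ℂ) (p : Fin 3 × Fin 3)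
    (u : HV) : HV :=
  if h : ∃ n, u ∈ Mset n then
    Function.update u h.choose (enc p (chi ρ p u h.choose))
  else u

/-- The outcome map `g`: if `u ∈ Mset n` with `n ≥ 1` (the largest—indeed, the
unique—such `n`), then `g(u) = sign(2·u_n − 1)` where `u_n` is the last recorded
coordinate; otherwise `g(u) = 0`. -/
def gOut (u : HV) : ℝ :=
  if h : ∃ n, u ∈ Mset (n + 1) then Real.sign (2 * u h.choose - 1) else 0

/-- The hidden state obtained from `u` by performing, in order, the measurements
at the positions listed in `l`. -/
def runPhi (ρ : Matrix (Fin 2 × Fin 2) (Fin 2 × Fin 2) ℂ)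
    (l : List (Fin 3 × Fin 3)) (u : HV) : HV :=
  l.foldl (fun v p => phi ρ p v) u

/-- The event that the sequential measurements at positions `pos 0, …, pos (n−1)`
yield the outcomes `s 0, …, s (n−1)`:  the `k`-th outcome is read off by `g`
after the first `k+1` interaction maps have been applied. -/
def seqEvent (ρ : Matrix (Fin 2 × Fin 2) (Fin 2 × Fin 2) ℂ) {n : ℕ}
    (pos : Fin n → Fin 3 × Fin 3) (s : Fin n → ℝ) : Set HV :=
  {u | ∀ k : Fin n, gOut (runPhi ρ ((List.ofFn pos).take (k + 1)) u) = s k}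

/-- `μ` is the infinite product of uniform probability measures on `[0,1]`,
characterized by its values on cylinder sets. -/
def IsUniformProductMeasure (μ : Measure HV) : Prop :=
  ∀ (J : Finset ℕ) (t : ℕ → Set ℝ), (∀ k, MeasurableSet (t k)) →
    μ {u | ∀ k ∈ J, u k ∈ t k} = ∏ k ∈ J, volume (t k ∩ Set.Icc (0 : ℝ) 1)

/-! Off a null set of hidden states, the `i`-th measurement reads only the untouched coordinate
`u i`, and it yields the outcome `σ i` iff `u i` lies on the correct side of a threshold computed
from the earlier outcomes. The event of a prescribed outcome sequence is therefore a cylinder, and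
its measure is the product of the conditional probabilities `condProb`. If `V_{P n} = V_{P k}` and
everything measured from step `k` on commutes, then `Π_{P n}^{-1}` can be moved next to
`Π_{P k}^{σ k}` in the history operator, where it is either absorbed or annihilates it. So the last
threshold is `1` or `0`, and the last conditional probability is `1` or `0` according as
`σ n = σ k`, unless an earlier factor already vanishes. -/

lemma σx_mul_self : σx * σx = 1 := by
  ext i j; fin_cases i <;> fin_cases j <;> simp [σx]

lemma σy_mul_self : σy * σy = 1 := by
  ext i j; fin_cases i <;> fin_cases j <;> simp [σy]

lemma σz_mul_self : σz * σz = 1 := by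
  ext i j; fin_cases i <;> fin_cases j <;> simp [σz]

lemma MP_mul_self (i j : Fin 3) : MP i j * MP i j = 1 := by
  fin_cases i <;> fin_cases j <;>
    simp [MP, ← Matrix.mul_kronecker_mul, σx_mul_self, σy_mul_self, σz_mul_self]

lemma Proj_mul_Proj_of_MP_eq {p q : Fin 3 × Fin 3} (h : MP p.1 p.2 = MP q.1 q.2)
    {s t : ℝ} (hs : s = -1 ∨ s = 1) (ht : t = -1 ∨ t = 1) :
    Proj p s * Proj q t = if s = t then Proj p s else 0 := by
  have hprod : Proj p s * Proj q t =
      (4⁻¹ : ℂ) • ((1 + s * t : ℂ) • 1 + (s + t : ℂ) • MP p.1 p.2) := by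
    simp only [Proj, ← h, smul_mul_smul, add_mul, mul_add, one_mul, mul_one, MP_mul_self]
    module
  rw [hprod, Proj]
  rcases hs with rfl | rfl <;> rcases ht with rfl | rfl <;> norm_num <;> module

lemma Proj_commute {p q : Fin 3 × Fin 3} (h : Commute (MP p.1 p.2) (MP q.1 q.2)) (s t : ℝ) :
    Commute (Proj p s) (Proj q t) :=
  (((Commute.one_left _).add_left
    ((Commute.one_right _).add_right ((h.smul_left _).smul_right _))).smul_left _).smul_right _

lemma Proj_one_eq_sub (p : Fin 3 × Fin 3) : Proj p 1 = 1 - Proj p (-1) := by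
  simp only [Proj]; push_cast; module

section Histories

variable (ρ : Matrix (Fin 2 × Fin 2) (Fin 2 × Fin 2) ℂ) (P : ℕ → Fin 3 × Fin 3) (σ : ℕ → ℝ)

def histProd (m : ℕ) : Matrix (Fin 2 × Fin 2) (Fin 2 × Fin 2) ℂ :=
  ((List.range m).map fun i => Proj (P i) (σ i)).prod

lemma histProd_zero : histProd P σ 0 = 1 := rfl

lemma histProd_succ (m : ℕ) : histProd P σ (m + 1) = histProd P σ m * Proj (P m) (σ m) := by
  simp [histProd, List.range_succ]

variable {P σ} in
lemma histProd_congr {τ : ℕ → ℝ} {m : ℕ} (h : ∀ i < m, σ i = τ i) :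
    histProd P σ m = histProd P τ m :=
  congrArg List.prod (List.map_congr_left fun i hi => by rw [h i (List.mem_range.mp hi)])

/-- `Proj q x` commutes leftwards past the later factors until it meets `Proj (P k) (σ k)`,
an eigenprojection of the same involution. -/
lemma histProd_mul_Proj_of_repeat {k n : ℕ} (hkn : k < n) (hσk : σ k = -1 ∨ σ k = 1)
    {q : Fin 3 × Fin 3} (hq : MP q.1 q.2 = MP (P k).1 (P k).2)
    (hcomm : ∀ i, k < i → i < n → Commute (MP q.1 q.2) (MP (P i).1 (P i).2))
    {x : ℝ} (hx : x = -1 ∨ x = 1) :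
    histProd P σ n * Proj q x = if σ k = x then histProd P σ n else 0 := by
  induction n, hkn using Nat.le_induction with
  | base =>
    rw [histProd_succ, mul_assoc, Proj_mul_Proj_of_MP_eq hq.symm hσk hx]
    split_ifs <;> simp
  | succ n hkn ih =>
    rw [histProd_succ, mul_assoc, ← (Proj_commute (hcomm n hkn n.lt_succ_self) _ _).eq,
      ← mul_assoc, ih fun i hki hin => hcomm i hki (by omega)]
    split_ifs <;> simp

def threshold (m : ℕ) : ℝ :=
  ((ρ * histProd P σ m * Proj (P m) (-1)).trace).re / ((ρ * histProd P σ m).trace).re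

end Histories

def outcomeRegion (x c : ℝ) : Set ℝ := if x = -1 then Set.Iio c else Set.Ici c

lemma measurableSet_outcomeRegion (x c : ℝ) : MeasurableSet (outcomeRegion x c) := by
  unfold outcomeRegion
  split_ifs
  exacts [measurableSet_Iio, measurableSet_Ici]

lemma ite_lt_eq_iff_mem_outcomeRegion {x y c : ℝ} (hx : x = -1 ∨ x = 1) :
    (if y < c then -1 else 1) = x ↔ y ∈ outcomeRegion x c := by
  rcases hx with rfl | rfl <;> by_cases h : y < c <;> norm_num [outcomeRegion, h, not_lt.mp]

lemma outcomeRegion_bounds_of_volume_ne_zero {x c : ℝ}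
    (h : volume (outcomeRegion x c ∩ Set.Icc 0 1) ≠ 0) :
    (x = -1 → 0 < c) ∧ (x ≠ -1 → c < 1) := by
  unfold outcomeRegion at h
  refine ⟨fun hx => ?_, fun hx => ?_⟩ <;> by_contra! hc <;> apply h
  · rw [if_pos hx, show Set.Iio c ∩ Set.Icc 0 1 = ∅ by ext; grind, measure_empty]
  · rw [if_neg hx]
    refine measure_mono_null (t := Set.Icc c 1) (fun y hy => ⟨hy.1, hy.2.2⟩) ?_
    rw [Real.volume_Icc, ENNReal.ofReal_eq_zero]
    linarith

lemma volume_outcomeRegion_indicator {x y : ℝ} (hx : x = -1 ∨ x = 1) (hy : y = -1 ∨ y = 1) :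
    volume (outcomeRegion x (if y = -1 then 1 else 0) ∩ Set.Icc 0 1) =
      if x = y then 1 else 0 := by
  rcases hx with rfl | rfl <;> rcases hy with rfl | rfl <;>
    norm_num only [outcomeRegion, if_true, if_false]
  · rw [show Set.Iio (1 : ℝ) ∩ Set.Icc 0 1 = Set.Ico 0 1 by ext; grind]
    simp
  · rw [show Set.Iio (0 : ℝ) ∩ Set.Icc 0 1 = ∅ by ext; grind]
    simp
  · rw [show Set.Ici (1 : ℝ) ∩ Set.Icc 0 1 = {1} by ext; grind]
    simp
  · rw [Set.inter_eq_right.mpr Set.Icc_subset_Ici_self]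
    simp

section ConditionalProbability

variable (ρ : Matrix (Fin 2 × Fin 2) (Fin 2 × Fin 2) ℂ) (P : ℕ → Fin 3 × Fin 3) (σ : ℕ → ℝ)

def condProb (m : ℕ) : ENNReal :=
  volume (outcomeRegion (σ m) (threshold ρ P σ m) ∩ Set.Icc 0 1)

variable {ρ σ}

lemma trace_histProd_pos (hρ : ρ.trace = 1) (hσ : ∀ i, σ i = -1 ∨ σ i = 1) {m : ℕ}
    (h : ∀ j < m, condProb ρ P σ j ≠ 0) : 0 < ((ρ * histProd P σ m).trace).re := by
  induction m with
  | zero => simp [histProd_zero, hρ]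
  | succ m ih =>
    have hD := ih fun j hj => h j (by omega)
    obtain ⟨hlow, hhigh⟩ := outcomeRegion_bounds_of_volume_ne_zero (h m m.lt_succ_self)
    rw [histProd_succ]
    rcases hσ m with hm | hm
    · rw [hm, ← mul_assoc]
      exact (div_pos_iff_of_pos_right hD).mp (hlow hm)
    · have hlt := (div_lt_one hD).mp (hhigh (by rw [hm]; norm_num))
      rw [hm, Proj_one_eq_sub, mul_sub, mul_one, mul_sub, ← mul_assoc, Matrix.trace_sub,
        Complex.sub_re]
      linarith

lemma prod_condProb_succ_of_repeat (hρ : ρ.trace = 1) (hσ : ∀ i, σ i = -1 ∨ σ i = 1)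
    {k n : ℕ} (hkn : k < n) (hrep : MP (P n).1 (P n).2 = MP (P k).1 (P k).2)
    (hcomm : ∀ i, k < i → i < n → Commute (MP (P n).1 (P n).2) (MP (P i).1 (P i).2)) :
    ∏ i ∈ Finset.range (n + 1), condProb ρ P σ i =
      if σ n = σ k then ∏ i ∈ Finset.range n, condProb ρ P σ i else 0 := by
  rw [Finset.prod_range_succ]
  by_cases h : ∃ j < n, condProb ρ P σ j = 0
  · obtain ⟨j, hj, hj0⟩ := h
    rw [Finset.prod_eq_zero (Finset.mem_range.mpr hj) hj0]
    simp
  have hD := trace_histProd_pos P hρ hσ fun j hj hj0 => h ⟨j, hj, hj0⟩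
  have hthreshold : threshold ρ P σ n = if σ k = -1 then 1 else 0 := by
    rw [threshold, mul_assoc, histProd_mul_Proj_of_repeat P σ hkn (hσ k) hrep hcomm (Or.inl rfl)]
    split_ifs <;> simp [hD.ne']
  rw [condProb, hthreshold, volume_outcomeRegion_indicator (hσ n) (hσ k)]
  split_ifs <;> simp

end ConditionalProbability

lemma eq_of_mem_Mset {u : HV} {a b : ℕ} (ha : u ∈ Mset a) (hb : u ∈ Mset b) : a = b := by
  by_contra hne
  rcases Nat.lt_or_gt_of_ne hne with h | h
  · exact ha.2 a le_rfl (hb.1 a h)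
  · exact hb.2 b le_rfl (ha.1 b h)

lemma phi_of_mem_Mset (ρ : Matrix (Fin 2 × Fin 2) (Fin 2 × Fin 2) ℂ) (p : Fin 3 × Fin 3)
    {u : HV} {m : ℕ} (hu : u ∈ Mset m) :
    phi ρ p u = Function.update u m (enc p (chi ρ p u m)) := by
  have h : ∃ n, u ∈ Mset n := ⟨m, hu⟩
  rw [phi, dif_pos h, eq_of_mem_Mset h.choose_spec hu]

lemma gOut_of_mem_Mset {u : HV} {j : ℕ} (hu : u ∈ Mset (j + 1)) :
    gOut u = Real.sign (2 * u j - 1) := by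
  have h : ∃ n, u ∈ Mset (n + 1) := ⟨j, hu⟩
  rw [gOut, dif_pos h, Nat.succ_injective (eq_of_mem_Mset h.choose_spec hu)]

lemma update_mem_Mset_succ {u : HV} {m : ℕ} (hu : u ∈ Mset m) {c : ℝ}
    (hc : ∃ z : ℤ, 27 * c = z) : Function.update u m c ∈ Mset (m + 1) := by
  refine ⟨fun i hi => ?_, fun i hi => ?_⟩
  · rcases Nat.lt_succ_iff_lt_or_eq.mp hi with hi | rfl
    · rw [Function.update_of_ne hi.ne]
      exact hu.1 i hi
    · rw [Function.update_self]
      exact hc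
  · rw [Function.update_of_ne (by omega)]
    exact hu.2 i (by omega)

lemma enc_eq (p : Fin 3 × Fin 3) (x : ℝ) :
    enc p x = (((if x = -1 then 0 else 18) + 3 * (p.1 : ℕ) + p.2 : ℕ) : ℝ) / 27 := by
  unfold enc
  split_ifs <;> simp

lemma exists_int_mul_enc_eq (p : Fin 3 × Fin 3) (x : ℝ) : ∃ z : ℤ, 27 * enc p x = z :=
  ⟨_, by
    rw [enc_eq, mul_div_cancel₀ _ (by norm_num : (27 : ℝ) ≠ 0)]
    exact (Int.cast_natCast _).symm⟩

lemma code_of_eq_enc {u : HV} {k : ℕ} {p : Fin 3 × Fin 3} {x : ℝ} (h : u k = enc p x) :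
    code u k = (if x = -1 then 0 else 18) + 3 * (p.1 : ℕ) + p.2 := by
  rw [code, h, enc_eq, mul_div_cancel₀ _ (by norm_num : (27 : ℝ) ≠ 0), Int.floor_natCast,
    Int.toNat_natCast]

lemma decPos_decSign_of_eq_enc {u : HV} {k : ℕ} {p : Fin 3 × Fin 3} {x : ℝ}
    (hx : x = -1 ∨ x = 1) (h : u k = enc p x) : decPos u k = p ∧ decSign u k = x := by
  have hcode := code_of_eq_enc h
  have hp1 := p.1.isLt
  have hp2 := p.2.isLt
  refine ⟨Prod.ext (Fin.ext ?_) (Fin.ext ?_), ?_⟩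
  · simp only [decPos, hcode]; split_ifs <;> omega
  · simp only [decPos, hcode]; split_ifs <;> omega
  · rcases hx with rfl | rfl <;> simp only [decSign, hcode] <;> norm_num <;> omega

lemma sign_two_mul_enc_sub_one (p : Fin 3 × Fin 3) {x : ℝ} (hx : x = -1 ∨ x = 1) :
    Real.sign (2 * enc p x - 1) = x := by
  have hp1 := p.1.isLt
  have hp2 := p.2.isLt
  rw [enc_eq]
  rcases hx with rfl | rfl
  · have : ((0 + 3 * (p.1 : ℕ) + p.2 : ℕ) : ℝ) ≤ 8 := by exact_mod_cast (by omega)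
    rw [if_pos rfl, Real.sign_of_neg (by linarith)]
  · have : (18 : ℝ) ≤ ((18 + 3 * (p.1 : ℕ) + p.2 : ℕ) : ℝ) := by exact_mod_cast (by omega)
    rw [if_neg (by norm_num), Real.sign_of_pos (by linarith)]

lemma chi_eq_ite (ρ : Matrix (Fin 2 × Fin 2) (Fin 2 × Fin 2) ℂ) (p : Fin 3 × Fin 3)
    {u : HV} {n : ℕ} (hu : u n < 1) :
    chi ρ p u n = if u n < F ρ p (-1) u n then -1 else 1 := by
  have hset : {x : ℝ | (x = -1 ∨ x = 1) ∧ F ρ p x u n > u n} =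
      if u n < F ρ p (-1) u n then {-1, 1} else {1} := by
    have hF1 : F ρ p 1 u n = 1 := if_neg (by norm_num)
    ext x
    by_cases hx : x = -1 ∨ x = 1
    · rcases hx with rfl | rfl <;> split_ifs with h <;> norm_num [h, hF1, hu]
    · split_ifs <;> simp only [Set.mem_ofPred_eq, Set.mem_insert_iff, Set.mem_singleton_iff] <;>
        tauto
  rw [chi, hset]
  split_ifs
  · rw [csInf_pair]
    norm_num
  · exact csInf_singleton 1

/-- Conull for the uniform product measure. On it no coordinate is a record yet, and since
`u n < 1 = F(+1)`, the outcome `χ` is `-1` or `+1` according as `u n < F(-1)` or not. -/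
def genericHV : Set HV := {u | ∀ m, u m < 1 ∧ ¬∃ z : ℤ, 27 * u m = z}

section Trajectory

variable (ρ : Matrix (Fin 2 × Fin 2) (Fin 2 × Fin 2) ℂ) (P : ℕ → Fin 3 × Fin 3)

def trajectory (u : HV) (j : ℕ) : HV := runPhi ρ ((List.range j).map P) u

def outcome (u : HV) (i : ℕ) : ℝ := chi ρ (P i) (trajectory ρ P u i) i

lemma trajectory_succ (u : HV) (j : ℕ) :
    trajectory ρ P u (j + 1) = phi ρ (P j) (trajectory ρ P u j) := by
  simp [trajectory, runPhi, List.range_succ]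

variable {u : HV}

lemma trajectory_spec (hu : u ∈ genericHV) (j : ℕ) :
    trajectory ρ P u j ∈ Mset j ∧ (∀ i, j ≤ i → trajectory ρ P u j i = u i) ∧
      ∀ i < j, trajectory ρ P u j i = enc (P i) (outcome ρ P u i) := by
  induction j with
  | zero => exact ⟨⟨by simp, fun i _ => (hu i).2⟩, fun _ _ => rfl, by simp⟩
  | succ j ih =>
    obtain ⟨hmem, hlater, hearlier⟩ := ih
    rw [trajectory_succ, phi_of_mem_Mset ρ (P j) hmem]
    refine ⟨update_mem_Mset_succ hmem (exists_int_mul_enc_eq _ _), fun i hi => ?_,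
      fun i hi => ?_⟩
    · rw [Function.update_of_ne (by omega)]
      exact hlater i (by omega)
    · rcases Nat.lt_succ_iff_lt_or_eq.mp hi with hi | rfl
      · rw [Function.update_of_ne hi.ne]
        exact hearlier i hi
      · rw [Function.update_self]
        rfl

lemma trajectory_self (hu : u ∈ genericHV) (i : ℕ) : trajectory ρ P u i i = u i :=
  (trajectory_spec ρ P hu i).2.1 i le_rfl

lemma outcome_eq_ite (hu : u ∈ genericHV) (i : ℕ) :
    outcome ρ P u i = if u i < F ρ (P i) (-1) (trajectory ρ P u i) i then -1 else 1 := by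
  rw [outcome, chi_eq_ite ρ (P i) (by rw [trajectory_self ρ P hu]; exact (hu i).1),
    trajectory_self ρ P hu]

lemma outcome_mem (hu : u ∈ genericHV) (i : ℕ) :
    outcome ρ P u i = -1 ∨ outcome ρ P u i = 1 := by
  rw [outcome_eq_ite ρ P hu]
  split_ifs <;> simp

lemma hist_trajectory (hu : u ∈ genericHV) {m j : ℕ} (hmj : m ≤ j) :
    hist (trajectory ρ P u j) m = histProd P (outcome ρ P u) m := by
  refine congrArg List.prod (List.map_congr_left fun i hi => ?_)
  have hi := List.mem_range.mp hi
  obtain ⟨hpos, hsign⟩ := decPos_decSign_of_eq_enc (outcome_mem ρ P hu i)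
    ((trajectory_spec ρ P hu j).2.2 i (by omega))
  rw [hpos, hsign]

lemma gOut_trajectory_succ (hu : u ∈ genericHV) (i : ℕ) :
    gOut (trajectory ρ P u (i + 1)) = outcome ρ P u i := by
  obtain ⟨hmem, -, hearlier⟩ := trajectory_spec ρ P hu (i + 1)
  rw [gOut_of_mem_Mset hmem, hearlier i i.lt_succ_self,
    sign_two_mul_enc_sub_one _ (outcome_mem ρ P hu i)]

variable {σ : ℕ → ℝ}

lemma outcome_eq_iff (hu : u ∈ genericHV) {m : ℕ} (hσ : σ m = -1 ∨ σ m = 1)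
    (h : ∀ i < m, outcome ρ P u i = σ i) :
    outcome ρ P u m = σ m ↔ u m ∈ outcomeRegion (σ m) (threshold ρ P σ m) := by
  rw [outcome_eq_ite ρ P hu, F, if_pos rfl, hist_trajectory ρ P hu le_rfl,
    histProd_congr h, ← threshold, ite_lt_eq_iff_mem_outcomeRegion hσ]

lemma forall_outcome_eq_iff (hu : u ∈ genericHV) (hσ : ∀ i, σ i = -1 ∨ σ i = 1) (m : ℕ) :
    (∀ i < m, outcome ρ P u i = σ i) ↔
      ∀ i < m, u i ∈ outcomeRegion (σ i) (threshold ρ P σ i) := by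
  induction m with
  | zero => simp
  | succ m ih =>
    simp only [Nat.forall_lt_succ_right]
    constructor
    · rintro ⟨h, hm⟩
      exact ⟨ih.mp h, (outcome_eq_iff ρ P hu (hσ m) h).mp hm⟩
    · rintro ⟨h, hm⟩
      exact ⟨ih.mpr h, (outcome_eq_iff ρ P hu (hσ m) (ih.mpr h)).mpr hm⟩

end Trajectory

lemma take_ofFn_eq_map_range {α : Type*} {N : ℕ} (f : Fin N → α) (g : ℕ → α)
    (hg : ∀ i : Fin N, g i = f i) {m : ℕ} (hm : m ≤ N) :
    (List.ofFn f).take m = (List.range m).map g := by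
  refine List.ext_getElem (by simp [hm]) fun i h₁ _ => ?_
  simp [hg ⟨i, by simp at h₁; omega⟩]

section SequentialEvents

variable (ρ : Matrix (Fin 2 × Fin 2) (Fin 2 × Fin 2) ℂ) {N : ℕ}
  (pos : Fin N → Fin 3 × Fin 3) (s : Fin N → ℝ) (P : ℕ → Fin 3 × Fin 3) (σ : ℕ → ℝ)

lemma mem_seqEvent_iff (hP : ∀ i : Fin N, P i = pos i) (hs : ∀ i : Fin N, σ i = s i)
    (hσ : ∀ i, σ i = -1 ∨ σ i = 1) {u : HV} (hu : u ∈ genericHV) :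
    u ∈ seqEvent ρ pos s ↔
      ∀ i ∈ Finset.range N, u i ∈ outcomeRegion (σ i) (threshold ρ P σ i) := by
  have hgOut (i : Fin N) :
      gOut (runPhi ρ ((List.ofFn pos).take (i + 1)) u) = outcome ρ P u i := by
    rw [take_ofFn_eq_map_range pos P hP i.isLt, ← gOut_trajectory_succ ρ P hu]
    rfl
  simp only [seqEvent, Set.mem_ofPred_eq, hgOut, ← hs, Finset.mem_range]
  exact Fin.forall_iff.trans (forall_outcome_eq_iff ρ P hu hσ N)

lemma measure_genericHV_compl {μ : Measure HV} (hμ : IsUniformProductMeasure μ) :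
    μ genericHVᶜ = 0 := by
  set B : Set ℝ := {x | 1 ≤ x ∨ ∃ z : ℤ, 27 * x = z}
  have hrecords : {x : ℝ | ∃ z : ℤ, 27 * x = z}.Countable :=
    (Set.countable_range fun z : ℤ => (z : ℝ) / 27).mono <| by
      rintro x ⟨z, hz⟩
      exact ⟨z, by simp [← hz]⟩
  have hB : MeasurableSet B := measurableSet_Ici.union hrecords.measurableSet
  have hBnull : volume (B ∩ Set.Icc 0 1) = 0 := by
    refine measure_mono_null (fun x ⟨hx, hx1⟩ => ?_) (hrecords.measure_zero volume)
    rcases hx with hx | hx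
    · exact ⟨27, by rw [le_antisymm hx1.2 hx]; norm_num⟩
    · exact hx
  have hcompl : genericHVᶜ = ⋃ m, {u : HV | ∀ k ∈ ({m} : Finset ℕ), u k ∈ B} := by
    ext u
    simp [genericHV, B, or_iff_not_imp_left]
  rw [hcompl, measure_iUnion_null_iff]
  intro m
  rw [hμ {m} (fun _ => B) fun _ => hB, Finset.prod_singleton, hBnull]

lemma measure_seqEvent {μ : Measure HV} (hμ : IsUniformProductMeasure μ)
    (hP : ∀ i : Fin N, P i = pos i) (hs : ∀ i : Fin N, σ i = s i)
    (hσ : ∀ i, σ i = -1 ∨ σ i = 1) :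
    μ (seqEvent ρ pos s) = ∏ i ∈ Finset.range N, condProb ρ P σ i := by
  simp only [condProb]
  rw [← hμ _ _ fun i => measurableSet_outcomeRegion _ _]
  refine measure_congr (Filter.eventuallyEq_set.mpr ?_)
  filter_upwards [mem_ae_iff.mpr (measure_genericHV_compl hμ)] with u hu
    using mem_seqEvent_iff ρ pos s P σ hP hs hσ hu

end SequentialEvents

theorem repeated_measurement_persistence_general
    (μ : Measure HV) (hμ : IsUniformProductMeasure μ)
    (ρ : Matrix (Fin 2 × Fin 2) (Fin 2 × Fin 2) ℂ)
    (hρtr : ρ.trace = 1)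
    (n : ℕ) (pos : Fin (n + 1) → Fin 3 × Fin 3) (k : Fin n)
    (hrep : MP (pos (Fin.last n)).1 (pos (Fin.last n)).2 =
      MP (pos k.castSucc).1 (pos k.castSucc).2)
    (hcomm : ∀ a b : Fin (n + 1), (k : ℕ) ≤ (a : ℕ) → (k : ℕ) ≤ (b : ℕ) →
      Commute (MP (pos a).1 (pos a).2) (MP (pos b).1 (pos b).2))
    (s : Fin (n + 1) → ℝ) (hs : ∀ j, s j = -1 ∨ s j = 1) :
    (s (Fin.last n) ≠ s k.castSucc → μ (seqEvent ρ pos s) = 0) ∧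
    (s (Fin.last n) = s k.castSucc →
      μ (seqEvent ρ pos s) =
        μ (seqEvent ρ (fun j : Fin n => pos j.castSucc)
            (fun j : Fin n => s j.castSucc))) := by
  let clamp (i : ℕ) : Fin (n + 1) := ⟨min i n, by omega⟩
  have hclamp {i : ℕ} (hi : i < n + 1) : clamp i = ⟨i, hi⟩ := Fin.ext (min_eq_left (by omega))
  have hlast : clamp n = Fin.last n := hclamp n.lt_succ_self
  have hk : clamp k = k.castSucc := hclamp (by omega)
  have hP (i : Fin (n + 1)) : (pos ∘ clamp) i = pos i := congrArg pos (hclamp i.isLt)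
  have hσ (i : Fin (n + 1)) : (s ∘ clamp) i = s i := congrArg s (hclamp i.isLt)
  have hσ_mem (i : ℕ) : (s ∘ clamp) i = -1 ∨ (s ∘ clamp) i = 1 := hs _
  have hrep' : MP ((pos ∘ clamp) n).1 ((pos ∘ clamp) n).2 =
      MP ((pos ∘ clamp) k).1 ((pos ∘ clamp) k).2 := by
    simpa only [Function.comp_apply, hlast, hk] using hrep
  have hcomm' (i : ℕ) (hki : k < i) (hin : i < n) :
      Commute (MP ((pos ∘ clamp) n).1 ((pos ∘ clamp) n).2)
        (MP ((pos ∘ clamp) i).1 ((pos ∘ clamp) i).2) := by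
    simp only [Function.comp_apply, hlast, hclamp (show i < n + 1 by omega)]
    exact hcomm (Fin.last n) ⟨i, by omega⟩ k.isLt.le hki.le
  rw [measure_seqEvent ρ pos s _ _ hμ hP hσ hσ_mem,
    measure_seqEvent ρ _ _ _ _ hμ (fun i => hP i.castSucc) (fun i => hσ i.castSucc) hσ_mem,
    prod_condProb_succ_of_repeat _ hρtr hσ_mem k.isLt hrep' hcomm']
  simp only [Function.comp_apply, hlast, hk]
  exact ⟨fun hne => if_neg hne, fun heq => if_pos heq⟩

/-- **Corollary 1.** Under the Sequential Measurements model, if a measurement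
is repeated and no intervening incompatible measurements are performed, the
outcome μ-almost surely remains unchanged.  Here the `n+1` measurements are at
positions `pos 0, …, pos n` (so `n + 1 ≥ 2`), the last measured operator equals
the one measured at step `k` (`0`-indexed, `k ≤ n − 1`), and all operators
measured from step `k` onwards mutually commute.  Then for any ±1 outcomes:
if the last outcome differs from the `k`-th the event has measure zero, and if
it agrees the event has the same measure as the event for the first `n`
measurements alone. -/
theorem repeated_measurement_persistence
    (μ : Measure HV) (hμ : IsUniformProductMeasure μ)
    (ρ : Matrix (Fin 2 × Fin 2) (Fin 2 × Fin 2) ℂ)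
    (hρ : ρ.PosSemidef) (hρtr : ρ.trace = 1)
    (n : ℕ) (hn : 1 ≤ n) (pos : Fin (n + 1) → Fin 3 × Fin 3) (k : Fin n)
    (hrep : MP (pos (Fin.last n)).1 (pos (Fin.last n)).2 =
      MP (pos k.castSucc).1 (pos k.castSucc).2)
    (hcomm : ∀ a b : Fin (n + 1), (k : ℕ) ≤ (a : ℕ) → (k : ℕ) ≤ (b : ℕ) →
      Commute (MP (pos a).1 (pos a).2) (MP (pos b).1 (pos b).2))
    (s : Fin (n + 1) → ℝ) (hs : ∀ j, s j = -1 ∨ s j = 1) :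
    (s (Fin.last n) ≠ s k.castSucc → μ (seqEvent ρ pos s) = 0) ∧
    (s (Fin.last n) = s k.castSucc →
      μ (seqEvent ρ pos s) =
        μ (seqEvent ρ (fun j : Fin n => pos j.castSucc)
            (fun j : Fin n => s j.castSucc))) :=
  repeated_measurement_persistence_general μ hμ ρ hρtr n pos k hrep hcomm s hs

end
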